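/- Let (𝒞, 𝒞^⊥¹) be a cotorsion pair on 𝓑 with 𝒞 rigid, and let ℋ/𝒞 be its heart. If g : A → B is an epimorphism in 𝓑 with A, B ∈ ℋ such that the image ḡ of g in the heart ℋ/𝒞 is an epimorphism, then Hom_𝓑(X, g) : Hom_𝓑(X, A) → Hom_𝓑(X, B) is surjective for every X ∈ Ω𝒞. -/

import Mathlib

open CategoryTheory Category Limits ZeroObject

universe v u

namespace CotorsionPaper

variable {B : Type u} [Category.{v} B] [Abelian B]

/-- `f, g` form a short exact sequence `0 → X → Y → Z → 0`. -/
def IsSES {X Y Z : B} (f : X ⟶ Y) (g : Y ⟶ Z) : Prop :=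
  ∃ w : f ≫ g = 0, (ShortComplex.mk f g w).ShortExact

/-- `Ext¹(X, Y) = 0`: every short exact sequence `0 → Y → E → X → 0` splits. -/
def Ext1Zero (X Y : B) : Prop :=
  ∀ ⦃E : B⦄ (i : Y ⟶ E) (p : E ⟶ X), IsSES i p → ∃ s : X ⟶ E, s ≫ p = 𝟙 X

/-- `Ext²(X, Y) = 0`, via dimension shifting: `Ext¹(K, Y) = 0` for any syzygy `K` of `X`. -/
def Ext2Zero (X Y : B) : Prop :=
  ∀ ⦃K P : B⦄ (i : K ⟶ P) (p : P ⟶ X), Projective P → IsSES i p → Ext1Zero K Y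

/-- A (strictly) full additive subcategory: closed under isomorphisms,
contains a zero object and is closed under finite direct sums. -/
structure AddSubcat (S : Set B) : Prop where
  zero_mem : (0 : B) ∈ S
  iso_closed : ∀ ⦃X Y : B⦄, (X ≅ Y) → X ∈ S → Y ∈ S
  sum_closed : ∀ ⦃X Y : B⦄, X ∈ S → Y ∈ S → (X ⊞ Y) ∈ S

/-- `S` is closed under direct summands (retracts). -/
def ClosedUnderSummands (S : Set B) : Prop :=
  ∀ ⦃X Y : B⦄ (r : X ⟶ Y) (s : Y ⟶ X), s ≫ r = 𝟙 Y → X ∈ S → Y ∈ S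

/-- `S` is rigid: `Ext¹(X, Y) = 0` for all `X, Y ∈ S`. -/
def Rigid (S : Set B) : Prop :=
  ∀ ⦃X⦄, X ∈ S → ∀ ⦃Y⦄, Y ∈ S → Ext1Zero X Y

/-- `S^⊥¹`. -/
def rightPerp (S : Set B) : Set B := {Y | ∀ ⦃X⦄, X ∈ S → Ext1Zero X Y}

/-- `^⊥¹S`. -/
def leftPerp (S : Set B) : Set B := {X | ∀ ⦃Y⦄, Y ∈ S → Ext1Zero X Y}

/-- `f : X ⟶ A` is a right `S`-approximation of `A`. -/
def IsRightApprox (S : Set B) {X A : B} (f : X ⟶ A) : Prop :=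
  X ∈ S ∧ ∀ ⦃X' : B⦄, X' ∈ S → ∀ g : X' ⟶ A, ∃ h : X' ⟶ X, h ≫ f = g

def ContravariantlyFinite (S : Set B) : Prop :=
  ∀ A : B, ∃ (X : B) (f : X ⟶ A), IsRightApprox S f

/-- `f : A ⟶ X` is a left `S`-approximation of `A`. -/
def IsLeftApprox (S : Set B) {A X : B} (f : A ⟶ X) : Prop :=
  X ∈ S ∧ ∀ ⦃X' : B⦄, X' ∈ S → ∀ g : A ⟶ X', ∃ h : X ⟶ X', f ≫ h = g

def CovariantlyFinite (S : Set B) : Prop :=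
  ∀ A : B, ∃ (X : B) (f : A ⟶ X), IsLeftApprox S f

/-- `(U, V)` is a cotorsion pair. -/
structure CotorsionPair (U V : Set B) : Prop where
  summands_left : ClosedUnderSummands U
  summands_right : ClosedUnderSummands V
  ext : ∀ ⦃X⦄, X ∈ U → ∀ ⦃Y⦄, Y ∈ V → Ext1Zero X Y
  resol : ∀ X : B, ∃ (VX UX : B) (i : VX ⟶ UX) (p : UX ⟶ X),
    VX ∈ V ∧ UX ∈ U ∧ IsSES i p
  coresol : ∀ X : B, ∃ (VX UX : B) (i : X ⟶ VX) (p : VX ⟶ UX),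
    VX ∈ V ∧ UX ∈ U ∧ IsSES i p

/-- `CoCone(S, T)`. -/
def CoCone (S T : Set B) : Set B :=
  {X | ∃ (B' B'' : B) (i : X ⟶ B') (p : B' ⟶ B''), B' ∈ S ∧ B'' ∈ T ∧ IsSES i p}

/-- `Cone(S, T)`. -/
def Cone (S T : Set B) : Set B :=
  {X | ∃ (B' B'' : B) (i : B' ⟶ B'') (p : B'' ⟶ X), B' ∈ S ∧ B'' ∈ T ∧ IsSES i p}

/-- The subcategory `𝒫` of projective objects. -/
def projSet : Set B := {P | Projective P}

/-- The subcategory `ℐ` of injective objects. -/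
def injSet : Set B := {I | Injective I}

/-- `Ω𝒞`, the (first) syzygy of `𝒞`. -/
def Syz (C : Set B) : Set B := CoCone projSet C

/-- Condition (RCP): `𝒫 ⊆ 𝒞`, `𝒞` rigid, contravariantly finite,
closed under direct summands (and a full additive subcategory). -/
structure RCP (C : Set B) : Prop where
  add : AddSubcat C
  proj_mem : ∀ ⦃P : B⦄, Projective P → P ∈ C
  rigid : Rigid C
  contra : ContravariantlyFinite C
  summands : ClosedUnderSummands C

/-- `f` factors through an object of `S`. -/
def FactorsThru (S : Set B) {X Y : B} (f : X ⟶ Y) : Prop :=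
  ∃ (Z : B) (g : X ⟶ Z) (h : Z ⟶ Y), Z ∈ S ∧ g ≫ h = f

/-- The ideal of morphisms of the full subcategory on `H` factoring through an object of `S`. -/
def idealRel (H S : Set B) : HomRel (ObjectProperty.FullSubcategory (· ∈ H)) :=
  fun X Y f g => FactorsThru S (show X.obj ⟶ Y.obj from f.hom - g.hom)

/-- The ideal quotient `H/S`. -/
abbrev HeartCat (H S : Set B) := CategoryTheory.Quotient (idealRel H S)

/-- The quotient functor `H → H/S`. -/
abbrev heartQ (H S : Set B) : ObjectProperty.FullSubcategory (· ∈ H) ⥤ HeartCat H S :=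
  CategoryTheory.Quotient.functor _

/-- The zero morphism in the ideal quotient `H/S`. -/
def heartZero (H S : Set B) (X Y : HeartCat H S) : X ⟶ Y :=
  (heartQ H S).map (0 : X.as ⟶ Y.as)

/-- `κ` is a kernel of `φ` in the ideal quotient `H/S`. -/
structure IsKernelArrow {H S : Set B} {K X Y : HeartCat H S}
    (κ : K ⟶ X) (φ : X ⟶ Y) : Prop where
  w : κ ≫ φ = heartZero H S K Y
  lift : ∀ ⦃T : HeartCat H S⦄ (t : T ⟶ X), t ≫ φ = heartZero H S T Y →
    ∃! u : T ⟶ K, u ≫ κ = t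

/-- `π` is a cokernel of `φ` in the ideal quotient `H/S`. -/
structure IsCokernelArrow {H S : Set B} {X Y Q : HeartCat H S}
    (φ : X ⟶ Y) (π : Y ⟶ Q) : Prop where
  w : φ ≫ π = heartZero H S X Q
  desc : ∀ ⦃T : HeartCat H S⦄ (t : Y ⟶ T), φ ≫ t = heartZero H S X T →
    ∃! u : Q ⟶ T, π ≫ u = t

/-- The class of epimorphisms in `H/S` whose kernel object lies in `A`. -/
def epiClassWithKernelIn (H S A : Set B) : MorphismProperty (HeartCat H S) :=
  fun X Y φ => Epi φ ∧ ∃ (K : HeartCat H S) (κ : K ⟶ X),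
    K.as.obj ∈ A ∧ IsKernelArrow κ φ

/-- The class of monomorphisms in `H/S` whose cokernel object lies in `A`. -/
def monoClassWithCokernelIn (H S A : Set B) : MorphismProperty (HeartCat H S) :=
  fun X Y φ => Mono φ ∧ ∃ (Q : HeartCat H S) (π : Y ⟶ Q),
    Q.as.obj ∈ A ∧ IsCokernelArrow φ π

/-- The diagram `(⋄)` associated with a morphism `f : Y ⟶ X`. -/
structure DiamondDiagram {Y X : B} (f : Y ⟶ X) {OmX PX Z₁ IY SgY Z₂ : B}
    (q : OmX ⟶ PX) (p : PX ⟶ X) (j : OmX ⟶ Z₁) (g : Z₁ ⟶ Y)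
    (i : Y ⟶ IY) (c : IY ⟶ SgY) (h : X ⟶ Z₂) (e : Z₂ ⟶ SgY)
    (u : Z₁ ⟶ PX) (v : IY ⟶ Z₂) : Prop where
  projPX : Projective PX
  injIY : Injective IY
  ses_proj : IsSES q p
  ses_pullback : IsSES j g
  ses_inj : IsSES i c
  ses_pushout : IsSES h e
  comm₁ : j ≫ u = q
  comm₂ : u ≫ p = g ≫ f
  comm₃ : f ≫ h = i ≫ v
  comm₄ : v ≫ e = c

/-- The class of morphisms `f : Y ⟶ X` admitting a diagram `(⋄)` with
`Z₁ ∈ ZCond` and `h` factoring through an object of `HCond`. -/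
def Rclass (ZCond HCond : Set B) : MorphismProperty B :=
  fun Y X f => ∃ (OmX PX Z₁ IY SgY Z₂ : B) (q : OmX ⟶ PX) (p : PX ⟶ X)
    (j : OmX ⟶ Z₁) (g : Z₁ ⟶ Y) (i : Y ⟶ IY) (c : IY ⟶ SgY)
    (h : X ⟶ Z₂) (e : Z₂ ⟶ SgY) (u : Z₁ ⟶ PX) (v : IY ⟶ Z₂),
    DiamondDiagram f q p j g i c h e u v ∧ Z₁ ∈ ZCond ∧ FactorsThru HCond h

/-- The class of morphisms `f : Y ⟶ X` admitting a diagram `(⋄)` with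
`g` factoring through an object of `GCond` and `h` through an object of `HCond`. -/
def RtildeClass (GCond HCond : Set B) : MorphismProperty B :=
  fun Y X f => ∃ (OmX PX Z₁ IY SgY Z₂ : B) (q : OmX ⟶ PX) (p : PX ⟶ X)
    (j : OmX ⟶ Z₁) (g : Z₁ ⟶ Y) (i : Y ⟶ IY) (c : IY ⟶ SgY)
    (h : X ⟶ Z₂) (e : Z₂ ⟶ SgY) (u : Z₁ ⟶ PX) (v : IY ⟶ Z₂),
    DiamondDiagram f q p j g i c h e u v ∧ FactorsThru GCond g ∧ FactorsThru HCond h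

/-- The objects of the heart `ℋ` of a cotorsion pair `(U, V)`. -/
def HeartObjects (U V : Set B) : Set B :=
  {X | (∃ (VX UX : B) (i : VX ⟶ UX) (p : UX ⟶ X),
          IsSES i p ∧ VX ∈ V ∧ UX ∈ U ∩ V) ∧
       (∃ (VX UX : B) (i : X ⟶ VX) (p : VX ⟶ UX),
          IsSES i p ∧ VX ∈ U ∩ V ∧ UX ∈ U)}


end CotorsionPaper

/-!
Push the presentation `0 → A → C₁ → C₂ → 0` of `A ∈ ℋ` out along `g`, obtaining
`0 → X → T → C₂ → 0`; rigidity of `𝒞` makes `T` an object of `ℋ` again. Since `g ≫ ι` factors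
through `C₁ ∈ 𝒞`, where `ι : X → T`, and `ḡ` is epi, `ι` itself factors through some `C' ∈ 𝒞`.
Given `0 → U → P → C₀ → 0` and `f : U → X`, the vanishing of `Ext¹(C₀, C')` extends
`U → X → C'` to `P`, projectivity of `P` lifts `P → C' → T` along the epimorphism `C₁ → T`, and
the restriction of this lift to `U` lands in `A` and lifts `f` along `g`.
-/

namespace CotorsionPaper

variable {B : Type u} [Category.{v} B]

section FactorsThru

variable {S : Set B} {X Y Z : B}

lemma FactorsThru.comp_left {f : Y ⟶ Z} (hf : FactorsThru S f) (w : X ⟶ Y) :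
    FactorsThru S (w ≫ f) :=
  have ⟨T, u, v, hT, huv⟩ := hf
  ⟨T, w ≫ u, v, hT, by rw [assoc, huv]⟩

lemma FactorsThru.comp_right {f : X ⟶ Y} (hf : FactorsThru S f) (w : Y ⟶ Z) :
    FactorsThru S (f ≫ w) :=
  have ⟨T, u, v, hT, huv⟩ := hf
  ⟨T, u, v ≫ w, hT, by rw [← assoc, huv]⟩

variable [Preadditive B]

lemma FactorsThru.neg {f : X ⟶ Y} (hf : FactorsThru S f) : FactorsThru S (-f) :=
  have ⟨Z, u, v, hZ, huv⟩ := hf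
  ⟨Z, u, -v, hZ, by rw [Preadditive.comp_neg, huv]⟩

end FactorsThru

section Ideal

variable [Abelian B] {S : Set B} {X Y : B}

lemma factorsThru_zero (hS : AddSubcat S) : FactorsThru S (0 : X ⟶ Y) :=
  ⟨0, 0, 0, hS.zero_mem, zero_comp⟩

lemma FactorsThru.add (hS : AddSubcat S) {f f' : X ⟶ Y} (hf : FactorsThru S f)
    (hf' : FactorsThru S f') : FactorsThru S (f + f') :=
  have ⟨Z, u, v, hZ, huv⟩ := hf
  have ⟨Z', u', v', hZ', huv'⟩ := hf'
  ⟨Z ⊞ Z', biprod.lift u u', biprod.desc v v', hS.sum_closed hZ hZ',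
    by rw [biprod.lift_desc, huv, huv']⟩

variable {H : Set B}

lemma idealRel_congruence (hS : AddSubcat S) : Congruence (idealRel H S) where
  equivalence :=
    { refl := fun f => by simpa [idealRel] using factorsThru_zero hS
      symm := fun hfg => by simpa [idealRel] using hfg.neg
      trans := fun hfg hgh => by simpa [idealRel] using hfg.add hS hgh }
  comp_left := fun w _ _ hg => by simpa [idealRel, Preadditive.comp_sub] using hg.comp_left w.hom
  comp_right := fun w hf => by simpa [idealRel, Preadditive.sub_comp] using hf.comp_right w.hom

lemma heartQ_map_eq_iff (hS : AddSubcat S) {X Y : ObjectProperty.FullSubcategory (· ∈ H)}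
    (f f' : X ⟶ Y) :
    (heartQ H S).map f = (heartQ H S).map f' ↔ FactorsThru S (f.hom - f'.hom) :=
  have := idealRel_congruence (H := H) hS
  Quotient.functor_map_eq_iff _ f f'

lemma factorsThru_of_epi_heartQ_map (hS : AddSubcat S)
    {A X T : ObjectProperty.FullSubcategory (· ∈ H)} (g : A ⟶ X) [Epi ((heartQ H S).map g)]
    (ι : X ⟶ T) (h : FactorsThru S (g ≫ ι).hom) : FactorsThru S ι.hom := by
  have hι : (heartQ H S).map ι = (heartQ H S).map 0 := by
    rw [← cancel_epi ((heartQ H S).map g), ← Functor.map_comp, ← Functor.map_comp,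
      heartQ_map_eq_iff hS]
    simpa using h
  simpa using (heartQ_map_eq_iff hS ι 0).1 hι

end Ideal

variable [Abelian B]

namespace IsSES

variable {X Y Z : B} {f : X ⟶ Y} {g : Y ⟶ Z}

lemma comp_eq_zero (h : IsSES f g) : f ≫ g = 0 :=
  h.fst

lemma shortExact (h : IsSES f g) : (ShortComplex.mk f g h.comp_eq_zero).ShortExact :=
  h.snd

lemma mono (h : IsSES f g) : Mono f :=
  h.shortExact.mono_f

lemma epi (h : IsSES f g) : Epi g :=
  h.shortExact.epi_g

lemma exists_lift (h : IsSES f g) {W : B} (k : W ⟶ Y) (hk : k ≫ g = 0) :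
    ∃ l : W ⟶ X, l ≫ f = k :=
  have := h.mono
  h.shortExact.exact.lift' k hk

lemma exists_desc (h : IsSES f g) {W : B} (k : Y ⟶ W) (hk : f ≫ k = 0) :
    ∃ l : Z ⟶ W, g ≫ l = k :=
  have := h.epi
  h.shortExact.exact.desc' k hk

lemma of_exists_lift (w : f ≫ g = 0) [Mono f] [Epi g]
    (hlift : ∀ {W : B} (k : W ⟶ Y), k ≫ g = 0 → ∃ l : W ⟶ X, l ≫ f = k) : IsSES f g :=
  ⟨w, .mk' (ShortComplex.exact_of_f_is_kernel _ (KernelFork.IsLimit.ofι' f w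
    fun k hk => ⟨(hlift k hk).choose, (hlift k hk).choose_spec⟩)) ‹_› ‹_›⟩

lemma of_exists_desc (w : f ≫ g = 0) [Mono f] [Epi g]
    (hdesc : ∀ {W : B} (k : Y ⟶ W), f ≫ k = 0 → ∃ l : Z ⟶ W, g ≫ l = k) : IsSES f g :=
  ⟨w, .mk' (ShortComplex.exact_of_g_is_cokernel _ (CokernelCofork.IsColimit.ofπ' g w
    fun k hk => ⟨(hdesc k hk).choose, (hdesc k hk).choose_spec⟩)) ‹_› ‹_›⟩

end IsSES

variable {V E W : B} {i : V ⟶ E} {p : E ⟶ W}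

lemma isSES_pushout_inr (h : IsSES i p) {V' : B} (c : V ⟶ V') :
    IsSES (pushout.inr i c) (pushout.desc p 0 (by rw [h.comp_eq_zero, comp_zero])) := by
  have := h.mono
  have : Epi (pushout.desc p 0 (by rw [h.comp_eq_zero, comp_zero]) : pushout i c ⟶ W) :=
    have := h.epi
    epi_of_epi_fac (pushout.inl_desc _ _ _)
  refine .of_exists_desc (pushout.inr_desc _ _ _) fun k hk => ?_
  obtain ⟨l, hl⟩ := h.exists_desc (pushout.inl i c ≫ k) (by
    rw [pushout.condition_assoc, hk, comp_zero])
  exact ⟨l, pushout.hom_ext (by rw [pushout.inl_desc_assoc, hl])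
    (by rw [pushout.inr_desc_assoc, zero_comp, hk])⟩

lemma isSES_pullback_snd (h : IsSES i p) {W' : B} (c : W' ⟶ W) :
    IsSES (pullback.lift i 0 (by rw [h.comp_eq_zero, zero_comp])) (pullback.snd p c) := by
  have := h.epi
  have : Mono (pullback.lift i 0 (by rw [h.comp_eq_zero, zero_comp]) : V ⟶ pullback p c) :=
    have := h.mono
    mono_of_mono_fac (pullback.lift_fst _ _ _)
  refine .of_exists_lift (pullback.lift_snd _ _ _) fun k hk => ?_
  obtain ⟨l, hl⟩ := h.exists_lift (k ≫ pullback.fst p c) (by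
    rw [assoc, pullback.condition, reassoc_of% hk, zero_comp])
  exact ⟨l, pullback.hom_ext (by rw [assoc, pullback.lift_fst, hl])
    (by rw [assoc, pullback.lift_snd, comp_zero, hk])⟩

namespace Ext1Zero

lemma splitting (hext : Ext1Zero W V) (h : IsSES i p) :
    Nonempty (ShortComplex.mk i p h.comp_eq_zero).Splitting :=
  have ⟨s, hs⟩ := hext i p h
  ⟨.ofExactOfSection _ h.shortExact.exact s hs h.mono⟩

lemma exists_retraction (hext : Ext1Zero W V) (h : IsSES i p) : ∃ r : E ⟶ V, i ≫ r = 𝟙 V :=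
  have ⟨σ⟩ := hext.splitting h
  ⟨σ.r, σ.f_r⟩

lemma nonempty_iso_biprod (hext : Ext1Zero W V) (h : IsSES i p) : Nonempty (E ≅ V ⊞ W) :=
  have ⟨σ⟩ := hext.splitting h
  ⟨σ.isoBinaryBiproduct⟩

lemma exists_extension {V' : B} (hext : Ext1Zero W V') (h : IsSES i p) (u : V ⟶ V') :
    ∃ k : E ⟶ V', i ≫ k = u := by
  obtain ⟨r, hr⟩ := hext.exists_retraction (isSES_pushout_inr h u)
  exact ⟨pushout.inl i u ≫ r, by rw [pushout.condition_assoc, hr, comp_id]⟩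

lemma exists_lift {W' : B} (hext : Ext1Zero W' V) (h : IsSES i p) (c : W' ⟶ W) :
    ∃ l : W' ⟶ E, l ≫ p = c := by
  obtain ⟨s, hs⟩ := hext _ _ (isSES_pullback_snd h c)
  exact ⟨s ≫ pullback.fst p c, by rw [assoc, pullback.condition, reassoc_of% hs]⟩

end Ext1Zero

namespace CotorsionPair

variable {𝒰 𝒱 : Set B}

lemma iso_mem (hcp : CotorsionPair 𝒰 𝒱) {X Y : B} (e : X ≅ Y) (hX : X ∈ 𝒰) : Y ∈ 𝒰 :=
  hcp.summands_left e.hom e.inv e.inv_hom_id hX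

lemma zero_mem (hcp : CotorsionPair 𝒰 𝒱) : (0 : B) ∈ 𝒰 :=
  have ⟨_, _, _, p, _, hU, _⟩ := hcp.resol 0
  hcp.summands_left p 0 ((isZero_zero B).eq_of_src _ _) hU

lemma biprod_mem (hcp : CotorsionPair 𝒰 𝒱) {X Y : B} (hX : X ∈ 𝒰) (hY : Y ∈ 𝒰) :
    (X ⊞ Y) ∈ 𝒰 := by
  obtain ⟨V, U, i, p, hV, hU, h⟩ := hcp.resol (X ⊞ Y)
  obtain ⟨l₁, hl₁⟩ := (hcp.ext hX hV).exists_lift h biprod.inl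
  obtain ⟨l₂, hl₂⟩ := (hcp.ext hY hV).exists_lift h biprod.inr
  exact hcp.summands_left p (biprod.desc l₁ l₂) (by ext <;> simp [hl₁, hl₂]) hU

lemma addSubcat (hcp : CotorsionPair 𝒰 𝒱) : AddSubcat 𝒰 :=
  ⟨hcp.zero_mem, fun _ _ e => hcp.iso_mem e, fun _ _ => hcp.biprod_mem⟩

end CotorsionPair

lemma mem_coCone_of_isSES {C : Set B} (hC : AddSubcat C) (hrigid : Rigid C) {X T W : B}
    {i : X ⟶ T} {p : T ⟶ W} (h : IsSES i p) (hX : X ∈ CoCone C C) (hW : W ∈ C) :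
    T ∈ CoCone C C := by
  obtain ⟨C₁, C₂, x, y, hC₁, hC₂, hxy⟩ := hX
  obtain ⟨e⟩ := (hrigid hW hC₁).nonempty_iso_biprod (isSES_pushout_inr h x)
  have hQ : pushout x i ∈ C :=
    hC.iso_closed (e.symm ≪≫ pushoutSymmetry i x) (hC.sum_closed hC₁ hW)
  exact ⟨_, C₂, _, _, hQ, hC₂, isSES_pushout_inr hxy i⟩

/-- The pushout square of a monomorphism is also a pullback square. -/
lemma exists_lift_of_comp_pushout_inr {A X E W U : B} {α : A ⟶ E} {β : E ⟶ W} (h : IsSES α β)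
    (g : A ⟶ X) (f : U ⟶ X) (l : U ⟶ E) (hl : l ≫ pushout.inl α g = f ≫ pushout.inr α g) :
    ∃ k : U ⟶ A, k ≫ g = f := by
  have := h.mono
  have w : α ≫ β = g ≫ (0 : X ⟶ W) := by rw [h.comp_eq_zero, comp_zero]
  obtain ⟨k, hk⟩ := h.exists_lift l (by
    rw [← pushout.inl_desc β 0 w, reassoc_of% hl, pushout.inr_desc, comp_zero])
  exact ⟨k, by rw [← cancel_mono (pushout.inr α g), assoc, ← pushout.condition, reassoc_of% hk, hl]⟩

lemma exists_lift_of_factorsThru_pushout_inr {A X E W U P C₀ : B} {S : Set B}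
    {α : A ⟶ E} {β : E ⟶ W} (hαβ : IsSES α β) (g : A ⟶ X) [Epi g]
    {a : U ⟶ P} {b : P ⟶ C₀} (hab : IsSES a b) [Projective P]
    (hext : ∀ ⦃Y⦄, Y ∈ S → Ext1Zero C₀ Y) (hι : FactorsThru S (pushout.inr α g)) (f : U ⟶ X) :
    ∃ k : U ⟶ A, k ≫ g = f := by
  obtain ⟨C', t₁, t₂, hC', ht⟩ := hι
  obtain ⟨e, he⟩ := (hext hC').exists_extension hab (f ≫ t₁)
  refine exists_lift_of_comp_pushout_inr hαβ g f
    (a ≫ Projective.factorThru (e ≫ t₂) (pushout.inl α g)) ?_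
  rw [assoc, Projective.factorThru_comp, reassoc_of% he, ht]

theorem statement_3_general {B : Type u} [Category.{v} B] [Abelian B]
    (C : Set B) (hcp : CotorsionPair C (rightPerp C)) (hrigid : Rigid C)
    {A X : B} (hA : A ∈ CoCone C C) (hX : X ∈ CoCone C C)
    (g : A ⟶ X) (hg : Epi g)
    (hgbar : Epi ((heartQ (CoCone C C) C).map (X := ⟨A, hA⟩) (Y := ⟨X, hX⟩) (ObjectProperty.homMk g))) :
    ∀ ⦃U : B⦄, U ∈ Syz C → ∀ f : U ⟶ X, ∃ h : U ⟶ A, h ≫ g = f := by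
  intro U hU f
  obtain ⟨P, C₀, a, b, hP, hC₀, hab⟩ := hU
  obtain ⟨C₁, C₂, α, β, hC₁, hC₂, hαβ⟩ := id hA
  have hC := hcp.addSubcat
  have hT := mem_coCone_of_isSES hC hrigid (isSES_pushout_inr hαβ g) hX hC₂
  have hι : FactorsThru C (pushout.inr α g) :=
    factorsThru_of_epi_heartQ_map hC (A := ⟨A, hA⟩) (X := ⟨X, hX⟩) (T := ⟨_, hT⟩)
      (ObjectProperty.homMk g) (ObjectProperty.homMk (pushout.inr α g))
      ⟨C₁, α, pushout.inl α g, hC₁, pushout.condition⟩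
  have : Projective P := hP
  exact exists_lift_of_factorsThru_pushout_inr hαβ g hab (hrigid hC₀) hι f

/-- if `ḡ` is an epimorphism in the heart, then `Hom(X, g)` is
surjective for `X ∈ Ω𝒞`. -/
theorem statement_3 {B : Type u} [Category.{v} B] [Abelian B]
    [EnoughProjectives B] [EnoughInjectives B]
    (C : Set B) (hcp : CotorsionPair C (rightPerp C)) (hrigid : Rigid C)
    {A X : B} (hA : A ∈ CoCone C C) (hX : X ∈ CoCone C C)
    (g : A ⟶ X) (hg : Epi g)
    (hgbar : Epi ((heartQ (CoCone C C) C).map (X := ⟨A, hA⟩) (Y := ⟨X, hX⟩) (ObjectProperty.homMk g))) :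
    ∀ ⦃U : B⦄, U ∈ Syz C → ∀ f : U ⟶ X, ∃ h : U ⟶ A, h ≫ g = f :=
  statement_3_general C hcp hrigid hA hX g hg hgbar

end CotorsionPaper
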